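/- arXiv:0912.2507 — 3 statements merged into one kernel-verified Lean document; each statement's English description precedes it below -/
import Mathlib

section
/- For every integer l ≥ 1, the sum over all l' with 0 ≤ l' ≤ l and all non-decreasing surjective maps ψ : {1,…,l} → {1,…,l'} of (−1)^{l−l'} · ∏_{i=1}^{l'} 1/|ψ^{−1}(i)|! equals 1/l!. -/
/-!
Cutting a monotone surjection `ψ : Fin l → Fin m` into its blocks identifies it with a composition
of `l`, so `compositionSum l m = ∑ ∏ 1 / cᵢ!` is the coefficient of `xˡ` in `(eˣ - 1)ᵐ`, and the
claim is the coefficient identity `∑ₘ (1 - eˣ)ᵐ = e⁻ˣ`. Without power series: removing the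
last block gives `compositionSum l (m + 1) = ∑_{a < l} compositionSum a m / (l - a)!`, and then
`∑ₘ (-1)ᵐ compositionSum l m = (-1)ˡ / l!` follows by strong induction on `l` from the vanishing
of the alternating binomial sum `∑ₐ (-1)ᵃ (l choose a)`.
-/

open Finset Nat

noncomputable def monotoneSurjections (l m : ℕ) : Finset (Fin l → Fin m) :=
  univ.filter fun ψ => Monotone ψ ∧ Function.Surjective ψ

noncomputable def fiberWeight {l m : ℕ} (ψ : Fin l → Fin m) : ℚ :=
  ∏ i : Fin m, (1 : ℚ) / (#{j | ψ j = i})!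

noncomputable def compositionSum (l m : ℕ) : ℚ :=
  ∑ ψ ∈ monotoneSurjections l m, fiberWeight ψ

lemma mem_monotoneSurjections {l m : ℕ} {ψ : Fin l → Fin m} :
    ψ ∈ monotoneSurjections l m ↔ Monotone ψ ∧ Function.Surjective ψ := by
  simp [monotoneSurjections]

def extendTop {l m : ℕ} (a : ℕ) (ψ : Fin a → Fin m) (x : Fin l) : Fin (m + 1) :=
  if h : (x : ℕ) < a then (ψ ⟨x, h⟩).castSucc else Fin.last m

section extendTop

variable {l m a : ℕ} {ψ : Fin a → Fin m}

lemma extendTop_lt_last_iff (x : Fin l) : extendTop a ψ x < Fin.last m ↔ (x : ℕ) < a := by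
  unfold extendTop
  split_ifs with h <;> simp [h]

lemma extendTop_castLE (h : a ≤ l) (x : Fin a) :
    extendTop a ψ (Fin.castLE h x) = (ψ x).castSucc := by
  simp [extendTop]

lemma monotone_extendTop (hψ : Monotone ψ) : Monotone (extendTop (l := l) a ψ) := by
  intro x y hxy
  unfold extendTop
  split_ifs with hx hy hy
  · exact Fin.castSucc_le_castSucc_iff.mpr (hψ hxy)
  · exact Fin.le_last _
  · exact absurd (lt_of_le_of_lt (Fin.le_def.mp hxy) hy) hx
  · rfl

lemma surjective_extendTop (ha : a < l) (hψ : Function.Surjective ψ) :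
    Function.Surjective (extendTop (l := l) a ψ) := by
  intro c
  induction c using Fin.lastCases with
  | last => exact ⟨⟨a, ha⟩, by simp [extendTop]⟩
  | cast c =>
    obtain ⟨x, rfl⟩ := hψ c
    exact ⟨Fin.castLE ha.le x, extendTop_castLE ha.le x⟩

lemma extendTop_injective (h : a ≤ l) :
    Function.Injective (extendTop (l := l) (m := m) a) := by
  intro ψ₁ ψ₂ heq
  funext x
  simpa [extendTop_castLE] using congrFun heq (Fin.castLE h x)

lemma card_extendTop_lt_last (h : a ≤ l) :
    #{x | extendTop (l := l) a ψ x < Fin.last m} = a := by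
  simp only [extendTop_lt_last_iff]
  rw [Fin.card_filter_val_lt, min_eq_right h]

lemma card_extendTop_eq_last (h : a ≤ l) :
    #{x | extendTop (l := l) a ψ x = Fin.last m} = l - a := by
  have hsplit := card_filter_add_card_filter_not (s := univ)
    (fun x => extendTop (l := l) a ψ x < Fin.last m)
  rw [card_extendTop_lt_last h, Finset.card_univ, Fintype.card_fin] at hsplit
  simp only [Fin.lt_last_iff_ne_last, not_not] at hsplit
  omega

lemma card_extendTop_eq_castSucc (h : a ≤ l) (i : Fin m) :
    #{x | extendTop (l := l) a ψ x = i.castSucc} = #{x | ψ x = i} := by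
  symm
  refine card_bij (fun x _ => Fin.castLE h x) ?_ ?_ ?_
  · intro x hx
    simpa [extendTop_castLE] using hx
  · intro x _ y _ hxy
    exact Fin.castLE_injective h hxy
  · intro x hx
    rw [mem_filter] at hx
    have hxa : (x : ℕ) < a := (extendTop_lt_last_iff x).mp (hx.2 ▸ Fin.castSucc_lt_last i)
    refine ⟨⟨x, hxa⟩, ?_, rfl⟩
    exact mem_filter.mpr ⟨mem_univ _,
      Fin.castSucc_injective _ ((extendTop_castLE (ψ := ψ) h ⟨x, hxa⟩).symm.trans hx.2)⟩

lemma fiberWeight_extendTop (h : a ≤ l) :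
    fiberWeight (extendTop (l := l) a ψ) = 1 / (l - a)! * fiberWeight ψ := by
  simp only [fiberWeight, Fin.prod_univ_castSucc, card_extendTop_eq_castSucc h,
    card_extendTop_eq_last h, mul_comm]

end extendTop

lemma exists_extendTop_eq {l m : ℕ} {ψ : Fin l → Fin (m + 1)}
    (hψ : ψ ∈ monotoneSurjections l (m + 1)) :
    ∃ ψ' ∈ monotoneSurjections #{x | ψ x < Fin.last m} m, extendTop _ ψ' = ψ := by
  obtain ⟨hmono, hsurj⟩ := mem_monotoneSurjections.mp hψ
  have hlt (x : Fin l) : (x : ℕ) < #{x | ψ x < Fin.last m} ↔ ψ x < Fin.last m :=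
    Tuple.lt_card_lt_iff_apply_lt_of_monotone hmono
  have hle : #{x | ψ x < Fin.last m} ≤ l := card_le_univ _ |>.trans_eq (Fintype.card_fin l)
  refine ⟨fun x => (ψ (Fin.castLE hle x)).castLT ((hlt _).mp x.2), ?_, ?_⟩
  · refine mem_monotoneSurjections.mpr ⟨fun x y hxy => hmono hxy, fun c => ?_⟩
    obtain ⟨x, hx⟩ := hsurj c.castSucc
    have hxa := (hlt x).mpr (hx ▸ Fin.castSucc_lt_last c)
    exact ⟨⟨x, hxa⟩, Fin.castSucc_injective _ (by simpa using hx)⟩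
  · funext x
    unfold extendTop
    split_ifs with hx
    · exact Fin.castSucc_castLT _ _
    · exact (le_antisymm (Fin.le_last _) (not_lt.mp (mt (hlt x).mpr hx))).symm

theorem compositionSum_succ (l m : ℕ) :
    compositionSum l (m + 1) = ∑ a ∈ range l, 1 / (l - a)! * compositionSum a m := by
  have hmaps : ∀ ψ ∈ monotoneSurjections l (m + 1), #{x | ψ x < Fin.last m} ∈ range l := by
    intro ψ hψ
    obtain ⟨x, hx⟩ := (mem_monotoneSurjections.mp hψ).2 (Fin.last m)
    simpa using card_lt_univ_of_notMem (s := {x | ψ x < Fin.last m}) (x := x) (by simp [hx])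
  -- group the surjections by the position where their last block starts
  rw [compositionSum, ← sum_fiberwise_of_maps_to hmaps]
  refine sum_congr rfl fun a ha => ?_
  have hal : a ≤ l := (mem_range.mp ha).le
  rw [compositionSum, mul_sum]
  symm
  refine sum_bij (fun ψ' _ => extendTop a ψ') (fun ψ' hψ' => ?_)
    (fun _ _ _ _ h => extendTop_injective hal h) (fun ψ hψ => ?_)
    (fun _ _ => (fiberWeight_extendTop hal).symm)
  · obtain ⟨hmono, hsurj⟩ := mem_monotoneSurjections.mp hψ'
    exact mem_filter.mpr ⟨mem_monotoneSurjections.mpr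
      ⟨monotone_extendTop hmono, surjective_extendTop (mem_range.mp ha) hsurj⟩,
      card_extendTop_lt_last hal⟩
  · obtain ⟨hmem, rfl⟩ := mem_filter.mp hψ
    obtain ⟨ψ', hψ', hext⟩ := exists_extendTop_eq hmem
    exact ⟨ψ', hψ', hext⟩

lemma compositionSum_eq_zero_of_lt {l m : ℕ} (h : l < m) : compositionSum l m = 0 := by
  refine sum_eq_zero fun ψ hψ => absurd (mem_monotoneSurjections.mp hψ).2 fun hsurj => ?_
  have hml : m ≤ l := by simpa using Fintype.card_le_of_surjective ψ hsurj
  omega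

lemma compositionSum_succ_zero (l : ℕ) : compositionSum (l + 1) 0 = 0 := by
  simp [compositionSum, monotoneSurjections]

lemma compositionSum_zero_zero : compositionSum 0 0 = 1 := by
  have huniv : monotoneSurjections 0 0 = univ :=
    filter_true_of_mem fun ψ _ => ⟨fun x => x.elim0, fun b => b.elim0⟩
  simp [compositionSum, huniv, fiberWeight]

lemma sum_range_neg_one_pow_div_factorial_mul_factorial {K : Type*} [Field K] [CharZero K]
    {n : ℕ} (hn : n ≠ 0) : ∑ a ∈ range (n + 1), (-1 : K) ^ a / (a ! * (n - a)!) = 0 := by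
  have hterm : ∀ a ∈ range (n + 1),
      (-1 : K) ^ a / (a ! * (n - a)!) = (-1) ^ a * n.choose a / n ! := by
    intro a ha
    have hfact : (n ! : K) ≠ 0 := by exact_mod_cast n.factorial_ne_zero
    rw [Nat.cast_choose K (mem_range_succ_iff.mp ha)]
    field_simp
  rw [sum_congr rfl hterm, ← sum_div, div_eq_zero_iff]
  left
  exact_mod_cast Int.alternating_sum_range_choose_of_ne hn

lemma sum_range_neg_one_pow_mul_compositionSum_of_le {l N : ℕ} (h : l ≤ N) :
    ∑ m ∈ range (N + 1), (-1 : ℚ) ^ m * compositionSum l m =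
      ∑ m ∈ range (l + 1), (-1) ^ m * compositionSum l m := by
  refine (sum_subset (range_subset_range.mpr (by omega)) fun m _ hm => ?_).symm
  rw [compositionSum_eq_zero_of_lt (by simp at hm; omega), mul_zero]

theorem sum_range_neg_one_pow_mul_compositionSum (l : ℕ) :
    ∑ m ∈ range (l + 1), (-1 : ℚ) ^ m * compositionSum l m = (-1) ^ l / l ! := by
  induction l using Nat.strong_induction_on with
  | _ l ih =>
  cases l with
  | zero => simp [compositionSum_zero_zero]
  | succ n =>
    have hbinom :=
      sum_range_neg_one_pow_div_factorial_mul_factorial (K := ℚ) (n := n + 1) (by omega)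
    rw [sum_range_succ, Nat.sub_self] at hbinom
    calc ∑ m ∈ range (n + 2), (-1 : ℚ) ^ m * compositionSum (n + 1) m
        = -∑ a ∈ range (n + 1), 1 / (n + 1 - a)! *
            ∑ m ∈ range (n + 1), (-1) ^ m * compositionSum a m := by
          rw [sum_range_succ', compositionSum_succ_zero, mul_zero, add_zero]
          simp only [compositionSum_succ, mul_sum, ← sum_neg_distrib]
          rw [sum_comm]
          exact sum_congr rfl fun a _ => sum_congr rfl fun m _ => by ring
      _ = -∑ a ∈ range (n + 1), (-1 : ℚ) ^ a / (a ! * (n + 1 - a)!) := by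
          congr 1
          refine sum_congr rfl fun a ha => ?_
          rw [sum_range_neg_one_pow_mul_compositionSum_of_le (mem_range_succ_iff.mp ha),
            ih a (by simpa [Nat.lt_succ_iff] using ha)]
          ring
      _ = (-1) ^ (n + 1) / (n + 1)! := by
          simp only [factorial_zero, cast_one, mul_one] at hbinom
          linear_combination -hbinom

theorem stmt0_general (l : ℕ) :
    ∑ l' ∈ Finset.range (l + 1),
      ∑ ψ ∈ (Finset.univ : Finset (Fin l → Fin l')).filter
          (fun ψ => Monotone ψ ∧ Function.Surjective ψ),
        ((-1 : ℚ)) ^ (l - l') *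
          ∏ i : Fin l', (1 : ℚ) /
            (Nat.factorial ((Finset.univ : Finset (Fin l)).filter (fun j => ψ j = i)).card) =
      1 / Nat.factorial l := by
  have hsign : ∀ m ∈ range (l + 1), (-1 : ℚ) ^ (l - m) = (-1) ^ l * (-1) ^ m := by
    intro m hm
    obtain ⟨k, rfl⟩ := Nat.exists_eq_add_of_le (mem_range_succ_iff.mp hm)
    rw [Nat.add_sub_cancel_left, pow_add, mul_right_comm, ← mul_pow]
    simp
  calc _ = ∑ m ∈ range (l + 1), (-1 : ℚ) ^ (l - m) * compositionSum l m := by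
        simp only [compositionSum, monotoneSurjections, fiberWeight, mul_sum]
    _ = (-1) ^ l * ∑ m ∈ range (l + 1), (-1) ^ m * compositionSum l m := by
        rw [mul_sum]
        exact sum_congr rfl fun m hm => by rw [hsign m hm, mul_assoc]
    _ = 1 / l ! := by
        rw [sum_range_neg_one_pow_mul_compositionSum, ← mul_div_assoc, ← pow_add,
          Even.neg_one_pow ⟨l, rfl⟩]

/-- For every `l ≥ 1`, the sum over all `l'` with `0 ≤ l' ≤ l` and all
non-decreasing surjective maps `ψ : Fin l → Fin l'` of
`(−1)^(l−l') · ∏_i 1/|ψ⁻¹(i)|!` equals `1/l!`. -/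
theorem stmt0 (l : ℕ) (hl : 1 ≤ l) :
    ∑ l' ∈ Finset.range (l + 1),
      ∑ ψ ∈ (Finset.univ : Finset (Fin l → Fin l')).filter
          (fun ψ => Monotone ψ ∧ Function.Surjective ψ),
        ((-1 : ℚ)) ^ (l - l') *
          ∏ i : Fin l', (1 : ℚ) /
            (Nat.factorial ((Finset.univ : Finset (Fin l)).filter (fun j => ψ j = i)).card) =
      1 / Nat.factorial l :=
  stmt0_general l
end

section
/- Let χ be an integer, M(q) = ∏_{k≥1}(1−q^k)^{−k} over ℚ, N(q) = q (d/dq) log M(q), and for power series f_i = ∑ a^{(i)}_n q^n and a subset Δ ⊆ ℤ³_{≥0} define {f₁·f₂·f₃}_Δ = ∑_{(n₁,n₂,n₃)∈Δ} a^{(1)}_{n₁} a^{(2)}_{n₂} a^{(3)}_{n₃} q^{n₁+n₂+n₃}. With Δ = {(m₁,m₂,m₃) ∈ ℤ³_{≥0} : −m₃ ≤ m₁−m₂ < m₃}, set DT2(q) = (1/4)·M(q)^{2χ} − (χ/2)·{M(q)^χ · M(q)^χ · N(q)}_Δ. Then the coefficient of q¹ in DT2(q) equals 0. -/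
open PowerSeries
open scoped Classical

/-- The MacMahon function `M(q) = ∏_{k≥1} (1 − q^k)^{−k}` as a formal power series over
`ℚ`: its coefficient of `q^n` is the corresponding coefficient of the finite product
`∏_{k=1}^{n} (1 − q^k)^{−k}` (factors with `k > n` do not affect degrees `≤ n`). -/
noncomputable def MacMahon : PowerSeries ℚ :=
  PowerSeries.mk fun n =>
    PowerSeries.coeff (R := ℚ) n
      (∏ k ∈ Finset.Icc 1 n, ((1 - (PowerSeries.X : PowerSeries ℚ) ^ k)⁻¹) ^ k)

/-- `f^χ` for an integer exponent `χ` (for `f` with invertible constant term). -/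
noncomputable def zpowPS (f : PowerSeries ℚ) (χ : ℤ) : PowerSeries ℚ :=
  f ^ χ.toNat * f⁻¹ ^ (-χ).toNat

/-- `N(q) = q·(d/dq) log M(q) = q·M'(q)/M(q)`. -/
noncomputable def Nser : PowerSeries ℚ :=
  PowerSeries.X * PowerSeries.derivativeFun MacMahon * MacMahon⁻¹

/-- `{f₁·f₂·f₃}_Δ = ∑_{(n₁,n₂,n₃)∈Δ} a¹_{n₁} a²_{n₂} a³_{n₃} q^{n₁+n₂+n₃}` for a subset
`Δ ⊆ ℤ³_{≥0}` given by a predicate on `ℕ³`. -/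
noncomputable def brace (P : ℕ → ℕ → ℕ → Prop) (f g h : PowerSeries ℚ) : PowerSeries ℚ :=
  PowerSeries.mk fun n =>
    ∑ p ∈ (Finset.range (n + 1) ×ˢ Finset.range (n + 1) ×ˢ Finset.range (n + 1)).filter
        (fun p => p.1 + p.2.1 + p.2.2 = n ∧ P p.1 p.2.1 p.2.2),
      PowerSeries.coeff (R := ℚ) p.1 f * PowerSeries.coeff (R := ℚ) p.2.1 g * PowerSeries.coeff (R := ℚ) p.2.2 h

/-- `Δ = {(m₁,m₂,m₃) ∈ ℤ³_{≥0} : −m₃ ≤ m₁ − m₂ < m₃}`. -/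
def DeltaP (m₁ m₂ m₃ : ℕ) : Prop :=
  -(m₃ : ℤ) ≤ (m₁ : ℤ) - (m₂ : ℤ) ∧ (m₁ : ℤ) - (m₂ : ℤ) < (m₃ : ℤ)

/-- `DT2(q) = (1/4)·M(q)^{2χ} − (χ/2)·{M(q)^χ · M(q)^χ · N(q)}_Δ`. -/
noncomputable def DT2 (χ : ℤ) : PowerSeries ℚ :=
  ((1 : ℚ) / 4) • zpowPS MacMahon (2 * χ) -
    ((χ : ℚ) / 2) • brace DeltaP (zpowPS MacMahon χ) (zpowPS MacMahon χ) Nser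

/-! Only coefficients of degree `≤ 1` enter: `M = 1 + q + ⋯`, so `M^χ = 1 + χq + ⋯` and
`N = q + ⋯`, while in degree one `Δ` contains only `(0, 0, 1)`. The coefficient of `q` is
therefore `(1/4)·2χ − (χ/2)·1 = 0`. -/

namespace PowerSeries

variable {k : Type*} [Field k]

lemma coeff_one_inv_of_constantCoeff_eq_one {f : k⟦X⟧} (hf : constantCoeff f = 1) :
    coeff 1 f⁻¹ = -coeff 1 f := by
  have h := congrArg (coeff 1) (PowerSeries.mul_inv_cancel f (by simp [hf]))
  rw [coeff_one_mul, constantCoeff_inv, hf, coeff_one] at h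
  simp only [inv_one, mul_one, one_ne_zero, if_false] at h
  linear_combination h

lemma coeff_one_X_mul_derivative_mul_inv (f : k⟦X⟧) :
    coeff 1 (X * derivative k f * f⁻¹) = coeff 1 f * (constantCoeff f)⁻¹ := by
  rw [mul_assoc, coeff_succ_X_mul, coeff_zero_eq_constantCoeff, map_mul, constantCoeff_inv,
    ← coeff_zero_eq_constantCoeff, coeff_derivative]
  simp

end PowerSeries

section zpowPS

variable {f : ℚ⟦X⟧}

lemma constantCoeff_zpowPS (hf : constantCoeff f = 1) (χ : ℤ) :
    constantCoeff (zpowPS f χ) = 1 := by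
  simp [zpowPS, hf]

lemma coeff_one_zpowPS (hf : constantCoeff f = 1) (χ : ℤ) :
    coeff 1 (zpowPS f χ) = χ * coeff 1 f := by
  have hχ : (χ.toNat : ℚ) - (-χ).toNat = χ := by exact_mod_cast Int.toNat_sub_toNat_neg χ
  simp only [zpowPS, coeff_one_mul, coeff_one_pow, coeff_one_inv_of_constantCoeff_eq_one hf,
    map_pow, constantCoeff_inv, hf, inv_one, one_pow, mul_one]
  linear_combination coeff 1 f * hχ

end zpowPS

lemma coeff_one_brace_deltaP (f g h : ℚ⟦X⟧) :
    coeff 1 (brace DeltaP f g h) = constantCoeff f * constantCoeff g * coeff 1 h := by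
  have hΔ : (Finset.range 2 ×ˢ Finset.range 2 ×ˢ Finset.range 2).filter
      (fun p => p.1 + p.2.1 + p.2.2 = 1 ∧ DeltaP p.1 p.2.1 p.2.2) = {(0, 0, 1)} := by
    ext ⟨a, b, c⟩
    simp only [DeltaP, neg_le_sub_iff_le_add, Finset.mem_filter, Finset.mem_product,
      Finset.mem_range, Order.lt_two_iff, Finset.mem_singleton, Prod.mk.injEq]
    omega
  rw [brace, coeff_mk, hΔ, Finset.sum_singleton, coeff_zero_eq_constantCoeff]

lemma constantCoeff_macMahon : constantCoeff MacMahon = 1 := by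
  simp [MacMahon]

lemma coeff_one_macMahon : coeff 1 MacMahon = 1 := by
  have h : coeff 1 ((1 - X : ℚ⟦X⟧)⁻¹) = 1 := by
    rw [coeff_one_inv_of_constantCoeff_eq_one (by simp)]
    simp
  simp [MacMahon, h]

lemma coeff_one_nser : coeff 1 Nser = 1 := by
  change coeff 1 (X * derivative ℚ MacMahon * MacMahon⁻¹) = 1
  rw [coeff_one_X_mul_derivative_mul_inv, coeff_one_macMahon, constantCoeff_macMahon]
  simp

/-- the coefficient of `q¹` in `DT2(q)` equals `0`. -/
theorem stmt8 (χ : ℤ) : PowerSeries.coeff (R := ℚ) 1 (DT2 χ) = 0 := by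
  rw [DT2, map_sub, map_smul, map_smul, coeff_one_zpowPS constantCoeff_macMahon,
    coeff_one_brace_deltaP, constantCoeff_zpowPS constantCoeff_macMahon, coeff_one_nser,
    coeff_one_macMahon, smul_eq_mul, smul_eq_mul]
  push_cast
  ring
end

section
/- Let C(Γ) = {(r,n) ∈ ℤ² \ {(0,0)} : r ≥ 0, n ≥ 0}, and define μ(r,n) = n/r ∈ ℚ ∪ {∞} (with μ = ∞ when r = 0). For l ≥ 1 define s_l : C(Γ)^l → {0, ±1} as follows: given (v₁,…,v_l), if for each 1 ≤ i ≤ l−1 either (a) μ(v_i) > μ(v_{i+1}) and μ(v₁+⋯+v_i) ≥ μ(v_{i+1}+⋯+v_l), or (b) μ(v_i) ≤ μ(v_{i+1}) and μ(v₁+⋯+v_i) < μ(v_{i+1}+⋯+v_l), then s_l(v₁,…,v_l) = (−1)^k where k is the number of indices i where (b) holds; otherwise s_l(v₁,…,v_l) = 0. Then for l ≥ 1 and the sequence v₁ = (2,0), v_i = (0, n_i) for 2 ≤ i ≤ l with each n_i ≥ 1, we have s_l(v₁,…,v_l) = (−1)^{l−1}. -/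
open scoped Classical

/-- The slope `μ(r,n) = n/r ∈ ℚ ∪ {∞}`, with `μ = ∞` when `r = 0`. -/
noncomputable def mu (v : ℤ × ℤ) : WithTop ℚ :=
  if v.1 = 0 then ⊤ else (((v.2 : ℚ) / (v.1 : ℚ) : ℚ) : WithTop ℚ)

/-- Condition (a) at position `i` (between the `(i+1)`-st and `(i+2)`-nd vectors of the
sequence `v 0, …, v (l-1)`): `μ(v_i) > μ(v_{i+1})` and `μ(v₁+⋯+v_i) ≥ μ(v_{i+1}+⋯+v_l)`. -/
noncomputable def condA (l : ℕ) (v : ℕ → ℤ × ℤ) (i : ℕ) : Prop :=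
  mu (v (i + 1)) < mu (v i) ∧
    mu (∑ j ∈ Finset.Ico (i + 1) l, v j) ≤ mu (∑ j ∈ Finset.range (i + 1), v j)

/-- Condition (b) at position `i`: `μ(v_i) ≤ μ(v_{i+1})` and
`μ(v₁+⋯+v_i) < μ(v_{i+1}+⋯+v_l)`. -/
noncomputable def condB (l : ℕ) (v : ℕ → ℤ × ℤ) (i : ℕ) : Prop :=
  mu (v i) ≤ mu (v (i + 1)) ∧
    mu (∑ j ∈ Finset.range (i + 1), v j) < mu (∑ j ∈ Finset.Ico (i + 1) l, v j)

/-- The map `s_l`: if each `1 ≤ i ≤ l−1` satisfies (a) or (b) then `(−1)^k` where `k` is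
the number of `i` satisfying (b); otherwise `0`. -/
noncomputable def sFun (l : ℕ) (v : ℕ → ℤ × ℤ) : ℤ :=
  if ∀ i < l - 1, condA l v i ∨ condB l v i then
    (-1) ^ ((Finset.range (l - 1)).filter (condB l v)).card
  else 0

/-- for `l ≥ 1` and the sequence `v₁ = (2,0)`, `v_i = (0, n_i)` with
`n_i ≥ 1` for `2 ≤ i ≤ l`, we have `s_l(v₁,…,v_l) = (−1)^{l−1}`. -/
theorem stmt11 (l : ℕ) (hl : 1 ≤ l) (v : ℕ → ℤ × ℤ)
    (h0 : v 0 = (2, 0))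
    (hrest : ∀ i, 1 ≤ i → i < l → (v i).1 = 0 ∧ 1 ≤ (v i).2) :
    sFun l v = (-1) ^ (l - 1) := by
  have hB : ∀ i, i < l - 1 → condB l v i := by
    intro i hi
    have hil : i + 1 < l := by omega
    constructor
    · have h1 : mu (v (i + 1)) = ⊤ := by
        unfold mu
        rw [if_pos (hrest (i + 1) (by omega) hil).1]
      rw [h1]; exact le_top
    · have hfst : (∑ j ∈ Finset.range (i + 1), v j).1 = 2 := by
        rw [Prod.fst_sum]
        rw [Finset.sum_eq_single_of_mem 0 (Finset.mem_range.mpr (by omega))]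
        · rw [h0]
        · intro j hj hne
          exact (hrest j (by omega) (by
            have := Finset.mem_range.mp hj; omega)).1
      have hIco : (∑ j ∈ Finset.Ico (i + 1) l, v j).1 = 0 := by
        rw [Prod.fst_sum]
        apply Finset.sum_eq_zero
        intro j hj
        have := Finset.mem_Ico.mp hj
        exact (hrest j (by omega) this.2).1
      have h2 : mu (∑ j ∈ Finset.Ico (i + 1) l, v j) = ⊤ := by
        unfold mu; rw [if_pos hIco]
      have h3 : mu (∑ j ∈ Finset.range (i + 1), v j) ≠ ⊤ := by
        unfold mu
        rw [if_neg (by rw [hfst]; norm_num)]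
        exact WithTop.coe_ne_top
      rw [h2]
      exact lt_top_iff_ne_top.mpr h3
  unfold sFun
  rw [if_pos (fun i hi => Or.inr (hB i hi))]
  congr 1
  rw [Finset.filter_true_of_mem (fun i hi => hB i (Finset.mem_range.mp hi)),
    Finset.card_range]
end
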